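/- arXiv:1506.04054 — 2 statements merged into one kernel-verified Lean document; each statement's English description precedes it below -/
import Mathlib

section
/- Let (G,σ) be a simple signed graph with a unique Sachs subgraph S. Then (G,σ) has an integral inverse (all entries of A⁻¹ are integers) if and only if S is a perfect matching. -/
open scoped Classical

/-- Degree of a vertex in a simple graph (as a cardinality, avoiding decidability). -/
noncomputable def sachsDeg {n : ℕ} (H : SimpleGraph (Fin n)) (v : Fin n) : ℕ :=
  Nat.card {w // H.Adj v w}

/-- `H` is a Sachs subgraph of the simple graph `G`: a spanning subgraph all of whose
components are `K₂`'s or cycles. -/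
def IsSachsSubgraph {n : ℕ} (G H : SimpleGraph (Fin n)) : Prop :=
  H ≤ G ∧ (∀ v, sachsDeg H v = 1 ∨ sachsDeg H v = 2) ∧
    ∀ u v, H.Adj u v → ¬(sachsDeg H u = 1 ∧ sachsDeg H v = 2)

/-!
Expanding `det A` over permutations, only the permutations `π` moving every vertex to a neighbour
contribute, and the edges `{i, π i}` of such a `π` form a Sachs subgraph, which must be `S`. Two
such permutations agree on the `K₂`'s of `S` and run each cycle of `S` in the same or in the
opposite direction, so they have the same sign and, `σ` being symmetric, the same product of edge
signs. Hence `det A = ±N`, where `N ≥ 1` (Hall's theorem) is the number of these permutations.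
An integer matrix with nonzero determinant has an integral inverse iff its determinant is `±1`,
i.e. iff `N = 1`; and `N = 1` iff `S` is a perfect matching, since `π⁻¹` is again such a
permutation and differs from `π` exactly when `S` has a cycle.
-/

open Equiv Finset

namespace Equiv.Perm

variable {α : Type*} {p : α → Prop} [DecidablePred p]

theorem sign_subtypeCongr_inv [Fintype α] [DecidableEq α] (ep : Perm {a // p a})
    (en : Perm {a // ¬p a}) : sign (ep.subtypeCongr en⁻¹) = sign (ep.subtypeCongr en) := by
  simp

theorem prod_inv_apply_eq_prod_apply {M : Type*} [Fintype α] [CommMonoid M] (e : Perm α)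
    {f : α → α → M} (hf : ∀ x y, f x y = f y x) : ∏ x, f (e⁻¹ x) x = ∏ x, f (e x) x := by
  rw [← Equiv.prod_comp e]
  simp [hf]

theorem prod_subtypeCongr_inv_apply {M : Type*} [Fintype α] [CommMonoid M]
    (ep : Perm {a // p a}) (en : Perm {a // ¬p a}) {f : α → α → M}
    (hf : ∀ x y, f x y = f y x) :
    ∏ x, f (ep.subtypeCongr en⁻¹ x) x = ∏ x, f (ep.subtypeCongr en x) x := by
  rw [← Fintype.prod_subtype_mul_prod_subtype p, ← Fintype.prod_subtype_mul_prod_subtype p]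
  simp only [subtypeCongr.left_apply_subtype, subtypeCongr.right_apply_subtype]
  rw [prod_inv_apply_eq_prod_apply en (f := fun x y => f x y) fun x y => hf x y]

end Equiv.Perm

namespace SimpleGraph

variable {V : Type*} [Fintype V] [DecidableEq V] (H : SimpleGraph V) [DecidableRel H.Adj]

/-- Weighting each edge `vu` by `1 / deg u` gives every vertex of `s` total weight `1`, while each
neighbour of `s` receives total weight at most `1`. -/
theorem card_le_card_biUnion_neighborFinset (hpos : ∀ v, 0 < H.degree v)
    (hdeg : ∀ u v, H.Adj u v → H.degree u = H.degree v) (s : Finset V) :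
    #s ≤ #(s.biUnion fun v => H.neighborFinset v) := by
  set T := s.biUnion fun v => H.neighborFinset v
  have hweight : ∀ v ∈ s, ∑ u ∈ H.neighborFinset v, (H.degree u : ℚ)⁻¹ = 1 := by
    intro v _
    rw [sum_congr rfl fun u hu => by rw [← hdeg v u ((H.mem_neighborFinset v u).1 hu)],
      sum_const, card_neighborFinset_eq_degree, nsmul_eq_mul,
      mul_inv_cancel₀ (by exact_mod_cast (hpos v).ne')]
  have hbound : ∀ u ∈ T, ∑ v ∈ s with H.Adj u v, (H.degree u : ℚ)⁻¹ ≤ 1 := by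
    intro u _
    rw [sum_const, nsmul_eq_mul, ← div_eq_mul_inv, div_le_one (by exact_mod_cast hpos u)]
    rw [← card_neighborFinset_eq_degree]
    exact_mod_cast card_le_card fun v hv => (H.mem_neighborFinset u v).2 (mem_filter.1 hv).2
  have : (#s : ℚ) ≤ #T :=
    calc (#s : ℚ) = ∑ v ∈ s, ∑ u ∈ H.neighborFinset v, (H.degree u : ℚ)⁻¹ := by
          rw [sum_congr rfl hweight, sum_const, nsmul_one]
      _ = ∑ u ∈ T, ∑ v ∈ s with H.Adj u v, (H.degree u : ℚ)⁻¹ :=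
          sum_comm' fun v u => by simp [T, H.adj_comm]; tauto
      _ ≤ ∑ _u ∈ T, 1 := sum_le_sum hbound
      _ = #T := by rw [sum_const, nsmul_one]
  exact_mod_cast this

theorem exists_perm_forall_adj (hpos : ∀ v, 0 < H.degree v)
    (hdeg : ∀ u v, H.Adj u v → H.degree u = H.degree v) :
    ∃ π : Perm V, ∀ v, H.Adj v (π v) := by
  obtain ⟨f, hf, hadj⟩ :=
    (all_card_le_biUnion_card_iff_exists_injective fun v => H.neighborFinset v).1
      (H.card_le_card_biUnion_neighborFinset hpos hdeg)
  exact ⟨Equiv.ofBijective f hf.bijective_of_finite, fun v => (H.mem_neighborFinset v _).1 (hadj v)⟩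

end SimpleGraph

theorem Matrix.forall_exists_intCast_inv_iff {ι K : Type*} [Fintype ι] [DecidableEq ι] [Field K]
    [CharZero K] {B : Matrix ι ι ℤ} (hB : B.det ≠ 0) :
    (∀ i j, ∃ z : ℤ, (B.map (Int.cast : ℤ → K))⁻¹ i j = z) ↔ IsUnit B.det := by
  have hmap_one : (1 : Matrix ι ι ℤ).map (Int.cast : ℤ → K) = 1 :=
    Matrix.map_one _ Int.cast_zero Int.cast_one
  have hmap_mul (M N : Matrix ι ι ℤ) :
      (M * N).map (Int.cast : ℤ → K) = M.map Int.cast * N.map Int.cast :=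
    Matrix.map_mul (f := Int.castRingHom K)
  constructor
  · intro h
    choose C hC using h
    have hdet : IsUnit (B.map (Int.cast : ℤ → K)).det := by
      have hcast : (B.det : K) = (B.map (Int.cast : ℤ → K)).det := (Int.castRingHom K).map_det B
      rw [← hcast]
      exact isUnit_iff_ne_zero.2 (Int.cast_ne_zero.2 hB)
    refine Matrix.isUnit_det_of_right_inverse (B := Matrix.of C)
      (Matrix.map_injective (f := (Int.cast : ℤ → K)) Int.cast_injective ?_)
    beta_reduce
    rw [hmap_mul, hmap_one, ← Matrix.mul_nonsing_inv _ hdet]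
    congr 1
    ext i j
    exact (hC i j).symm
  · intro h i j
    have hinv : (B.map (Int.cast : ℤ → K))⁻¹ = B⁻¹.map Int.cast :=
      Matrix.inv_eq_right_inv (by rw [← hmap_mul, Matrix.mul_nonsing_inv B h, hmap_one])
    exact ⟨B⁻¹ i j, by rw [hinv, Matrix.map_apply]⟩

def permGraph {V : Type*} (π : Perm V) : SimpleGraph V :=
  SimpleGraph.fromRel fun i j => π i = j

section permGraph

variable {V : Type*} {π π' : Perm V} {x : V}

theorem permGraph_adj {i j : V} : (permGraph π).Adj i j ↔ i ≠ j ∧ (π i = j ∨ π j = i) :=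
  SimpleGraph.fromRel_adj _ i j

theorem permGraph_inv : permGraph π⁻¹ = permGraph π := by
  ext i j
  simp only [permGraph_adj, Perm.inv_eq_iff_eq]
  tauto

theorem mem_neighborSet_permGraph (hx : π x ≠ x) {w : V} :
    w ∈ (permGraph π).neighborSet x ↔ w = π x ∨ w = π⁻¹ x := by
  rw [SimpleGraph.mem_neighborSet, permGraph_adj, Perm.eq_inv_iff_eq]
  constructor
  · rintro ⟨-, h | h⟩
    exacts [Or.inl h.symm, Or.inr h]
  · rintro (rfl | rfl)
    · exact ⟨hx.symm, Or.inl rfl⟩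
    · exact ⟨fun h => hx (congrArg π h), Or.inr rfl⟩

theorem apply_eq_or_eq_inv_of_permGraph_eq (h : permGraph π' = permGraph π) (hx : π' x ≠ x) :
    π' x = π x ∨ π' x = π⁻¹ x := by
  have hadj : (permGraph π).Adj x (π' x) := h ▸ permGraph_adj.2 ⟨hx.symm, Or.inl rfl⟩
  rw [permGraph_adj, Perm.eq_inv_iff_eq] at *
  exact hadj.2.imp Eq.symm id

theorem apply_apply_eq_of_permGraph_eq (h : permGraph π' = permGraph π) (hπ : ∀ x, π x ≠ x)
    (hπ' : ∀ x, π' x ≠ x) (hx : π' x = π x) : π' (π x) = π (π x) := by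
  rcases apply_eq_or_eq_inv_of_permGraph_eq h (hπ' (π x)) with h1 | h1
  · exact h1
  rw [Perm.coe_inv, symm_apply_apply] at h1
  -- `x` has neighbours `π x = π' x` and `π'⁻¹ x = π x`, so its other neighbour `π⁻¹ x` is `π x` too
  have hπx : π⁻¹ x = π x := by
    have h2 := apply_eq_or_eq_inv_of_permGraph_eq (π' := π⁻¹) (π := π') (x := x)
      (by rw [permGraph_inv, h]) fun e => hπ x (Perm.inv_eq_iff_eq.1 e).symm
    rcases h2 with h2 | h2
    · rw [h2, hx]
    · rw [h2, Perm.inv_eq_iff_eq.2 h1.symm]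
  rw [h1]
  exact Perm.inv_eq_iff_eq.1 hπx

theorem apply_apply_eq_iff_of_permGraph_eq (h : permGraph π' = permGraph π) (hπ : ∀ x, π x ≠ x)
    (hπ' : ∀ x, π' x ≠ x) : π' (π x) = π (π x) ↔ π' x = π x := by
  refine ⟨fun hx => ?_, apply_apply_eq_of_permGraph_eq h hπ hπ'⟩
  have := apply_apply_eq_of_permGraph_eq (π := π⁻¹) (π' := π'⁻¹) (x := π (π x))
    (by rw [permGraph_inv, permGraph_inv, h]) (fun y e => hπ y (Perm.inv_eq_iff_eq.1 e).symm)
    (fun y e => hπ' y (Perm.inv_eq_iff_eq.1 e).symm)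
    (by rw [Perm.inv_eq_iff_eq, Perm.coe_inv, symm_apply_apply, hx])
  rw [Perm.coe_inv, Perm.coe_inv, symm_apply_apply, symm_apply_apply] at this
  exact (Perm.inv_eq_iff_eq.1 this).symm

theorem exists_subtypeCongr_of_permGraph_eq (h : permGraph π' = permGraph π)
    (hπ : ∀ x, π x ≠ x) (hπ' : ∀ x, π' x ≠ x) :
    ∃ (p : V → Prop) (ep : Perm {x // p x}) (en : Perm {x // ¬p x}),
      π = ep.subtypeCongr en ∧ π' = ep.subtypeCongr en⁻¹ := by
  have hp (x : V) := apply_apply_eq_iff_of_permGraph_eq (x := x) h hπ hπ'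
  refine ⟨fun x => π' x = π x, π.subtypePerm hp, π.subtypePerm fun x => not_congr (hp x),
    ?_, ?_⟩ <;> ext x <;> by_cases hx : π' x = π x
  all_goals simp [hx]
  exact (apply_eq_or_eq_inv_of_permGraph_eq h (hπ' x)).resolve_left hx

theorem sign_smul_prod_eq_of_permGraph_eq [Fintype V] [DecidableEq V] {R : Type*} [CommRing R]
    {B : Matrix V V R} (hB : B.IsSymm) (h : permGraph π' = permGraph π) (hπ : ∀ x, π x ≠ x)
    (hπ' : ∀ x, π' x ≠ x) : Perm.sign π' • ∏ i, B (π' i) i = Perm.sign π • ∏ i, B (π i) i := by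
  obtain ⟨p, ep, en, rfl, rfl⟩ := exists_subtypeCongr_of_permGraph_eq h hπ hπ'
  rw [Perm.sign_subtypeCongr_inv,
    Perm.prod_subtypeCongr_inv_apply ep en (f := fun i j => B i j) fun i j => (hB.apply i j).symm]

end permGraph

section adjPerms

variable {V : Type*} [Fintype V] [DecidableEq V] {G : SimpleGraph V} {π : Perm V}

variable (G) in
noncomputable def adjPerms : Finset (Perm V) :=
  {π | ∀ i, G.Adj i (π i)}

theorem mem_adjPerms : π ∈ adjPerms G ↔ ∀ i, G.Adj i (π i) := by
  simp [adjPerms]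

theorem apply_ne_self_of_mem_adjPerms (hπ : π ∈ adjPerms G) (x : V) : π x ≠ x :=
  (G.ne_of_adj (mem_adjPerms.1 hπ x)).symm

theorem inv_mem_adjPerms (hπ : π ∈ adjPerms G) : π⁻¹ ∈ adjPerms G :=
  mem_adjPerms.2 fun i => by simpa using (mem_adjPerms.1 hπ (π⁻¹ i)).symm

theorem Matrix.det_eq_sum_adjPerms {R : Type*} [CommRing R] (B : Matrix V V R)
    (hB : ∀ i j, ¬G.Adj i j → B i j = 0) :
    B.det = ∑ π ∈ adjPerms G, Perm.sign π • ∏ i, B (π i) i := by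
  rw [Matrix.det_apply, adjPerms, sum_filter_of_ne]
  intro π _ hπ i
  by_contra hi
  exact hπ (by
    rw [prod_eq_zero (f := fun i => B (π i) i) (mem_univ i) (hB _ _ fun h => hi h.symm), smul_zero])

end adjPerms

section Sachs

variable {n : ℕ} {G S : SimpleGraph (Fin n)} {π : Perm (Fin n)}

theorem sachsDeg_eq_degree (H : SimpleGraph (Fin n)) (v : Fin n) : sachsDeg H v = H.degree v := by
  rw [sachsDeg, ← SimpleGraph.card_neighborSet_eq_degree, ← Nat.card_eq_fintype_card]
  rfl

theorem sachsDeg_permGraph {v : Fin n} (hv : π v ≠ v) :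
    sachsDeg (permGraph π) v = if π (π v) = v then 1 else 2 := by
  have hnbr : (permGraph π).neighborSet v = {π v, π⁻¹ v} :=
    Set.ext fun w => mem_neighborSet_permGraph hv
  rw [sachsDeg, show Nat.card {w // (permGraph π).Adj v w} = ((permGraph π).neighborSet v).ncard
    from Nat.card_coe_set_eq _, hnbr]
  by_cases h : π (π v) = v
  · rw [if_pos h, show π⁻¹ v = π v from Perm.inv_eq_iff_eq.2 h.symm, Set.pair_eq_singleton,
      Set.ncard_singleton]
  · rw [if_neg h, Set.ncard_pair fun e => h (Perm.eq_inv_iff_eq.1 e)]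

theorem isSachsSubgraph_permGraph (hπ : π ∈ adjPerms G) : IsSachsSubgraph G (permGraph π) := by
  have hfix := apply_ne_self_of_mem_adjPerms hπ
  refine ⟨fun i j hij => ?_, fun v => ?_, fun u v huv => ?_⟩
  · obtain ⟨-, rfl | rfl⟩ := permGraph_adj.1 hij
    exacts [mem_adjPerms.1 hπ i, (mem_adjPerms.1 hπ j).symm]
  · rw [sachsDeg_permGraph (hfix v)]
    split_ifs <;> simp
  · rw [sachsDeg_permGraph (hfix u), sachsDeg_permGraph (hfix v)]
    -- an edge at a vertex of a 2-cycle of `π` lies in that 2-cycle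
    obtain ⟨-, rfl | rfl⟩ := permGraph_adj.1 huv <;> split_ifs <;> simp_all

theorem permGraph_eq_of_mem_adjPerms (huniq : ∀ S', IsSachsSubgraph G S' → S' = S)
    (hπ : π ∈ adjPerms G) : permGraph π = S :=
  huniq _ (isSachsSubgraph_permGraph hπ)

theorem adjPerms_nonempty (hS : IsSachsSubgraph G S) : (adjPerms G).Nonempty := by
  have hdeg (v : Fin n) : S.degree v = 1 ∨ S.degree v = 2 := sachsDeg_eq_degree S v ▸ hS.2.1 v
  have hedge (u v : Fin n) (huv : S.Adj u v) : ¬(S.degree u = 1 ∧ S.degree v = 2) := by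
    simpa only [sachsDeg_eq_degree] using hS.2.2 u v huv
  obtain ⟨π, hπ⟩ := S.exists_perm_forall_adj (fun v => by rcases hdeg v with h | h <;> omega)
    fun u v huv => by
      have := hedge u v huv
      have := hedge v u huv.symm
      rcases hdeg u with h | h <;> rcases hdeg v with h' | h' <;> simp_all
  exact ⟨π, mem_adjPerms.2 fun i => hS.1 (hπ i)⟩

theorem card_adjPerms_eq_one_iff (hS : IsSachsSubgraph G S)
    (huniq : ∀ S', IsSachsSubgraph G S' → S' = S) :
    #(adjPerms G) = 1 ↔ ∀ v, sachsDeg S v = 1 := by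
  have hdeg {π : Perm (Fin n)} (hπ : π ∈ adjPerms G) (v : Fin n) :
      sachsDeg S v = if π (π v) = v then 1 else 2 := by
    rw [← permGraph_eq_of_mem_adjPerms huniq hπ,
      sachsDeg_permGraph (apply_ne_self_of_mem_adjPerms hπ v)]
  constructor
  · intro h v
    obtain ⟨π, hP⟩ := card_eq_one.1 h
    have hπ : π ∈ adjPerms G := hP ▸ mem_singleton_self π
    have hinv : π⁻¹ = π := mem_singleton.1 (hP ▸ inv_mem_adjPerms hπ)
    rw [hdeg hπ, if_pos (Perm.inv_eq_iff_eq.1 (DFunLike.congr_fun hinv v)).symm]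
  · intro h
    refine le_antisymm (card_le_one.2 fun π hπ π' hπ' => ?_) (adjPerms_nonempty hS).card_pos
    refine Equiv.ext fun x => ?_
    have hπx : π (π x) = x := by
      by_contra hx
      simpa [hdeg hπ, hx] using h x
    rcases apply_eq_or_eq_inv_of_permGraph_eq (by rw [permGraph_eq_of_mem_adjPerms huniq hπ,
      permGraph_eq_of_mem_adjPerms huniq hπ'] : permGraph π' = permGraph π)
      (apply_ne_self_of_mem_adjPerms hπ' x) with e | e
    · exact e.symm
    · rw [e, Perm.eq_inv_iff_eq, hπx]

theorem det_eq_card_adjPerms_smul (huniq : ∀ S', IsSachsSubgraph G S' → S' = S) {R : Type*}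
    [CommRing R] {B : Matrix (Fin n) (Fin n) R} (hB : B.IsSymm)
    (hBG : ∀ i j, ¬G.Adj i j → B i j = 0) {π₀ : Perm (Fin n)} (hπ₀ : π₀ ∈ adjPerms G) :
    B.det = #(adjPerms G) • (Perm.sign π₀ • ∏ i, B (π₀ i) i) := by
  rw [B.det_eq_sum_adjPerms hBG, ← sum_const]
  refine sum_congr rfl fun π hπ => sign_smul_prod_eq_of_permGraph_eq hB ?_
    (apply_ne_self_of_mem_adjPerms hπ₀) (apply_ne_self_of_mem_adjPerms hπ)
  rw [permGraph_eq_of_mem_adjPerms huniq hπ, permGraph_eq_of_mem_adjPerms huniq hπ₀]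

end Sachs

theorem exists_intMatrix_map_eq_signedAdjacency {V : Type*} (G : SimpleGraph V)
    {σ : V → V → ℝ} (hσsymm : ∀ i j, σ i j = σ j i)
    (hσval : ∀ i j, G.Adj i j → σ i j = 1 ∨ σ i j = -1) :
    ∃ B : Matrix V V ℤ, B.IsSymm ∧ (∀ i j, ¬G.Adj i j → B i j = 0) ∧
      (∀ i j, G.Adj i j → IsUnit (B i j)) ∧
      B.map Int.cast = Matrix.of fun i j => if G.Adj i j then σ i j else 0 := by
  refine ⟨Matrix.of fun i j => if G.Adj i j then if σ i j = 1 then 1 else -1 else 0,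
    Matrix.IsSymm.ext fun i j => ?_, fun i j h => by simp [h], fun i j h => ?_, ?_⟩
  · simp [G.adj_comm, hσsymm]
  · simp only [Matrix.of_apply, if_pos h]
    split_ifs
    exacts [isUnit_one, isUnit_one.neg]
  · ext i j
    by_cases h : G.Adj i j
    · rcases hσval i j h with h' | h' <;> norm_num [h, h']
    · simp [h]

/-- Let `(G,σ)` be a simple signed graph with a unique Sachs subgraph `S`.
Then `(G,σ)` has an integral inverse (all entries of `A⁻¹` are integers) if and only if
`S` is a perfect matching (every vertex has degree `1` in `S`). -/
theorem integral_inverse_iff_unique_sachs_is_perfect_matching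
    {n : ℕ} (G : SimpleGraph (Fin n))
    (σ : Fin n → Fin n → ℝ) (hσsymm : ∀ i j, σ i j = σ j i)
    (hσval : ∀ i j, G.Adj i j → σ i j = 1 ∨ σ i j = -1)
    (A : Matrix (Fin n) (Fin n) ℝ)
    (hAdef : A = Matrix.of fun i j => if G.Adj i j then σ i j else 0)
    (S : SimpleGraph (Fin n)) (hS : IsSachsSubgraph G S)
    (huniq : ∀ S' : SimpleGraph (Fin n), IsSachsSubgraph G S' → S' = S) :
    (∀ i j, ∃ z : ℤ, A⁻¹ i j = (z : ℝ)) ↔ ∀ v, sachsDeg S v = 1 := by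
  obtain ⟨B, hBsymm, hBzero, hBunit, hBA⟩ :=
    exists_intMatrix_map_eq_signedAdjacency G hσsymm hσval
  obtain ⟨π₀, hπ₀⟩ := adjPerms_nonempty hS
  have hterm : IsUnit (Perm.sign π₀ • ∏ i, B (π₀ i) i) := by
    rw [Units.smul_def, smul_eq_mul]
    exact (Units.isUnit _).mul
      (IsUnit.prod_univ_iff.2 fun i => hBunit _ _ (mem_adjPerms.1 hπ₀ i).symm)
  have hdet := det_eq_card_adjPerms_smul huniq hBsymm hBzero hπ₀
  rw [nsmul_eq_mul] at hdet
  have hdet0 : B.det ≠ 0 := by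
    rw [hdet]
    exact mul_ne_zero (Nat.cast_ne_zero.2 (adjPerms_nonempty hS).card_pos.ne') hterm.ne_zero
  rw [hAdef, ← hBA, Matrix.forall_exists_intCast_inv_iff hdet0, hdet, IsUnit.mul_iff,
    Int.ofNat_isUnit, Nat.isUnit_iff, card_adjPerms_eq_one_iff hS huniq, and_iff_left hterm]
end

section
/- Let G be a simple bipartite graph with a unique perfect matching M and adjacency matrix A. Then det(A) = (−1)^{|M|}; in particular A is invertible over ℤ up to sign, i.e., |det(A)| = 1. -/
/-!
In the Leibniz expansion of `det A` only the permutations `σ` with `v ~ σ v` for every vertex `v`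
contribute. For such a `σ`, joining every vertex of colour `true` to its image under `σ` gives a
perfect matching of `G`, hence `M`; doing the same with `σ⁻¹` shows that every edge `v — σ v` lies
in `M`, so `σ` is the involution of `M` exchanging matched vertices. Thus `det A` is the sign of
a fixed-point-free involution of `2m` points, which is `(-1)^m`.
-/

open scoped Classical

/-- `M` is a perfect matching of `G`, viewed as a spanning subgraph of `K₂` components. -/
def IsPerfectMatchingSub {n : ℕ} (G M : SimpleGraph (Fin n)) : Prop :=
  M ≤ G ∧ ∀ v, sachsDeg M v = 1

theorem Equiv.Perm.sign_eq_neg_one_pow_of_sq_eq_one {α : Type*} [Fintype α] [DecidableEq α]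
    {m : ℕ} (hα : Fintype.card α = 2 * m) {σ : Equiv.Perm α} (hσ : σ ^ 2 = 1)
    (hfix : ∀ a, σ a ≠ a) : Equiv.Perm.sign σ = (-1) ^ m := by
  have hnofix : Fintype.card (Function.fixedPoints σ) = 0 :=
    Fintype.card_eq_zero_iff.mpr ⟨fun a => hfix a a.2⟩
  rw [Equiv.Perm.sign_of_pow_two_eq_one hσ, hnofix, hα]
  simp

theorem Matrix.det_eq_sign_smul_prod_of_unique {n R : Type*} [Fintype n] [DecidableEq n]
    [CommRing R] (A : Matrix n n R) (τ : Equiv.Perm n)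
    (hτ : ∀ σ : Equiv.Perm n, (∀ i, A (σ i) i ≠ 0) → σ = τ) :
    A.det = Equiv.Perm.sign τ • ∏ i, A (τ i) i := by
  rw [Matrix.det_apply, Finset.sum_eq_single τ (fun σ _ hστ => ?_) (by simp)]
  obtain ⟨i, hi⟩ : ∃ i, A (σ i) i = 0 := by
    by_contra! h
    exact hστ (hτ σ h)
  rw [Finset.prod_eq_zero (f := fun j => A (σ j) j) (Finset.mem_univ i) hi, smul_zero]

theorem SimpleGraph.det_adjMatrix_of_unique_perm {V R : Type*} [Fintype V] [DecidableEq V]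
    [CommRing R] (G : SimpleGraph V) [DecidableRel G.Adj] (τ : Equiv.Perm V)
    (hτG : ∀ v, G.Adj v (τ v)) (hτ : ∀ σ : Equiv.Perm V, (∀ v, G.Adj v (σ v)) → σ = τ) :
    (G.adjMatrix R).det = (Equiv.Perm.sign τ : ℤ) := by
  have hsupp : ∀ σ : Equiv.Perm V, (∀ v, G.adjMatrix R (σ v) v ≠ 0) → σ = τ := fun σ hσ =>
    hτ σ fun v => G.adj_symm (of_not_not fun h => hσ v (by simp [h]))
  rw [Matrix.det_eq_sign_smul_prod_of_unique _ τ hsupp]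
  simp [fun v => G.adj_symm (hτG v), Units.smul_def]

theorem sachsDeg_eq_one_iff {n : ℕ} (H : SimpleGraph (Fin n)) (v : Fin n) :
    sachsDeg H v = 1 ↔ ∃! w, H.Adj v w := by
  rw [sachsDeg, Nat.card_eq_one_iff_exists]
  constructor
  · rintro ⟨⟨w, hw⟩, huniq⟩
    exact ⟨w, hw, fun u hu => congrArg Subtype.val (huniq ⟨u, hu⟩)⟩
  · rintro ⟨w, hw, huniq⟩
    exact ⟨⟨w, hw⟩, fun u => Subtype.ext (huniq u u.2)⟩

section Matching

variable {n : ℕ} {M : SimpleGraph (Fin n)} (hM : ∀ v, sachsDeg M v = 1)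

noncomputable def matchingPartner (v : Fin n) : Fin n :=
  ((sachsDeg_eq_one_iff M v).1 (hM v)).exists.choose

theorem adj_matchingPartner (v : Fin n) : M.Adj v (matchingPartner hM v) :=
  ((sachsDeg_eq_one_iff M v).1 (hM v)).exists.choose_spec

theorem eq_matchingPartner_of_adj {v w : Fin n} (h : M.Adj v w) : w = matchingPartner hM v :=
  ((sachsDeg_eq_one_iff M v).1 (hM v)).unique h (adj_matchingPartner hM v)

theorem matchingPartner_involutive : Function.Involutive (matchingPartner hM) := fun v =>
  (eq_matchingPartner_of_adj hM (adj_matchingPartner hM v).symm).symm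

noncomputable def matchingPerm : Equiv.Perm (Fin n) :=
  (matchingPartner_involutive hM).toPerm

theorem adj_matchingPerm (v : Fin n) : M.Adj v (matchingPerm hM v) :=
  adj_matchingPartner hM v

theorem eq_matchingPerm_of_forall_adj (σ : Equiv.Perm (Fin n)) (hσ : ∀ v, M.Adj v (σ v)) :
    σ = matchingPerm hM :=
  Equiv.ext fun v => eq_matchingPartner_of_adj hM (hσ v)

end Matching

theorem sign_matchingPerm {m : ℕ} {M : SimpleGraph (Fin (2 * m))}
    (hM : ∀ v, sachsDeg M v = 1) : Equiv.Perm.sign (matchingPerm hM) = (-1) ^ m :=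
  Equiv.Perm.sign_eq_neg_one_pow_of_sq_eq_one (Fintype.card_fin _)
    (Equiv.ext fun v => matchingPartner_involutive hM v)
    fun v h => M.ne_of_adj (adj_matchingPerm hM v) h.symm

section Bipartite

variable {n : ℕ} (G : SimpleGraph (Fin n)) (c : Fin n → Bool) (g : Equiv.Perm (Fin n))

def bicoloredPermGraph : SimpleGraph (Fin n) :=
  SimpleGraph.fromRel fun v w => c v = true ∧ w = g v

variable {G c g}

theorem adj_bicoloredPermGraph (hg : ∀ v, G.Adj v (g v)) {v : Fin n} (hv : c v = true) :
    (bicoloredPermGraph c g).Adj v (g v) :=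
  (SimpleGraph.fromRel_adj _ _ _).2 ⟨G.ne_of_adj (hg v), Or.inl ⟨hv, rfl⟩⟩

theorem isPerfectMatchingSub_bicoloredPermGraph (hc : ∀ i j, G.Adj i j → c i ≠ c j)
    (hg : ∀ v, G.Adj v (g v)) : IsPerfectMatchingSub G (bicoloredPermGraph c g) := by
  refine ⟨?_, fun v => (sachsDeg_eq_one_iff _ v).2 ?_⟩
  · rintro v w ⟨-, ⟨-, rfl⟩ | ⟨-, rfl⟩⟩
    exacts [hg v, (hg w).symm]
  cases hv : c v
  · have hpre : c (g.symm v) = true := by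
      simpa [hv] using hc (g.symm v) v (by simpa using hg (g.symm v))
    refine ⟨g.symm v, ?_, ?_⟩
    · simpa using (adj_bicoloredPermGraph hg hpre).symm
    · rintro w ⟨-, ⟨hv', -⟩ | ⟨-, rfl⟩⟩
      · simp [hv] at hv'
      · simp
  · refine ⟨g v, adj_bicoloredPermGraph hg hv, ?_⟩
    rintro w ⟨-, ⟨-, rfl⟩ | ⟨hw, rfl⟩⟩
    · rfl
    · simpa [hw, hv] using hc _ _ (hg w)

end Bipartite

theorem eq_matchingPerm_of_isPerfectMatchingSub_unique {n : ℕ} {G M : SimpleGraph (Fin n)}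
    {c : Fin n → Bool} (hc : ∀ i j, G.Adj i j → c i ≠ c j) (hM : IsPerfectMatchingSub G M)
    (huniq : ∀ M' : SimpleGraph (Fin n), IsPerfectMatchingSub G M' → M' = M)
    (σ : Equiv.Perm (Fin n)) (hσ : ∀ v, G.Adj v (σ v)) : σ = matchingPerm hM.2 := by
  have hσinv : ∀ v, G.Adj v (σ⁻¹ v) := fun v => by simpa using (hσ (σ⁻¹ v)).symm
  refine eq_matchingPerm_of_forall_adj hM.2 σ fun v => ?_
  cases hv : c v
  · have hσv : c (σ v) = true := by simpa [hv] using (hc _ _ (hσ v)).symm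
    have h := adj_bicoloredPermGraph hσinv hσv
    rw [huniq _ (isPerfectMatchingSub_bicoloredPermGraph hc hσinv)] at h
    simpa using h.symm
  · have h := adj_bicoloredPermGraph hσ hv
    rwa [huniq _ (isPerfectMatchingSub_bicoloredPermGraph hc hσ)] at h

/-- If `G` is a simple bipartite graph on `2m` vertices with a unique
perfect matching, then its (0,1) adjacency matrix `A` satisfies `det A = (−1)^m`;
in particular `|det A| = 1`. -/
theorem det_of_bipartite_with_unique_perfect_matching
    {m : ℕ} (G : SimpleGraph (Fin (2 * m)))
    (c : Fin (2 * m) → Bool) (hc : ∀ i j, G.Adj i j → c i ≠ c j)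
    (M : SimpleGraph (Fin (2 * m))) (hM : IsPerfectMatchingSub G M)
    (huniq : ∀ M' : SimpleGraph (Fin (2 * m)), IsPerfectMatchingSub G M' → M' = M)
    (A : Matrix (Fin (2 * m)) (Fin (2 * m)) ℝ)
    (hAdef : A = Matrix.of fun i j => if G.Adj i j then (1 : ℝ) else 0) :
    A.det = (-1) ^ m ∧ |A.det| = 1 := by
  have hdet : A.det = (-1) ^ m := by
    rw [hAdef, ← SimpleGraph.adjMatrix,
      G.det_adjMatrix_of_unique_perm (matchingPerm hM.2)
        (fun v => hM.1 (adj_matchingPerm hM.2 v))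
        (eq_matchingPerm_of_isPerfectMatchingSub_unique hc hM huniq),
      sign_matchingPerm]
    simp
  exact ⟨hdet, by simp [hdet]⟩
end
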